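/- arXiv:2103.01490 — 2 statements merged into one kernel-verified Lean document; each statement's English description precedes it below -/
import Mathlib

section
/- Swapping commutes with isomorphism: for GR-processes P, Q of a net N, there exists P' with P ≅ P' and P' obtained from Q by a single swap if and only if there exists Q' such that Q' is obtained from P by a single swap and P is mapped, i.e. Q' ≅ Q. Formally: (∃P'. P ≅ P' ∼_S Q) ⟺ (∃Q'. P ∼_S Q' ≅ Q), where P ∼_S Q means swap(P,p,q) = Q for some places p, q. -/
/-- A place/transition net: places `S`, transitions `T`, flow relation given by
`pre t s = F(s,t)` and `post t s = F(t,s)`, and initial marking `M0`. Every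
transition has a finite non-empty multiset of preplaces and a finite multiset
of postplaces. -/
structure Net where
  S : Type
  T : Type
  pre : T → S → ℕ
  post : T → S → ℕ
  M0 : S → ℕ
  pre_fin : ∀ t, (Function.support (pre t)).Finite
  pre_ne : ∀ t, ∃ s, 0 < pre t s
  post_fin : ∀ t, (Function.support (post t)).Finite

namespace Net

/-- `•G`, the preset of a finite multiset of transitions. -/
def preStep (N : Net) (G : N.T →₀ ℕ) : N.S → ℕ := fun s => G.sum fun t n => n * N.pre t s

/-- `G•`, the postset of a finite multiset of transitions. -/
def postStep (N : Net) (G : N.T →₀ ℕ) : N.S → ℕ := fun s => G.sum fun t n => n * N.post t s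

/-- `G` is enabled at marking `M` : `•G ⊆ M`. -/
def Enabled (N : Net) (M : N.S → ℕ) (G : N.T →₀ ℕ) : Prop := ∀ s, N.preStep G s ≤ M s

/-- `M —G→ M'` : the non-empty finite multiset `G` is a step from `M` to `M'`. -/
def Step (N : Net) (M : N.S → ℕ) (G : N.T →₀ ℕ) (M' : N.S → ℕ) : Prop :=
  G ≠ 0 ∧ N.Enabled M G ∧ ∀ s, M' s = M s - N.preStep G s + N.postStep G s

/-- Firing a single transition. -/
def Fire (N : Net) (M : N.S → ℕ) (t : N.T) (M' : N.S → ℕ) : Prop :=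
  N.Step M (Finsupp.single t 1) M'

/-- Markings reachable from the initial marking by firing single transitions. -/
def Reachable (N : Net) (M : N.S → ℕ) : Prop :=
  Relation.ReflTransGen (fun M₁ M₂ => ∃ t, N.Fire M₁ t M₂) N.M0 M

/-- The finite non-empty multiset `G` is in semantic conflict at `M`. -/
def Conflict (N : Net) (M : N.S → ℕ) (G : N.T →₀ ℕ) : Prop :=
  G ≠ 0 ∧ ¬ N.Enabled M G ∧ ∀ t, 0 < G t → N.Enabled M (Finsupp.single t (G t))

def ConflictFree (N : Net) : Prop := ∀ M, N.Reachable M → ∀ G, ¬ N.Conflict M G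

def BinaryConflictFree (N : Net) : Prop :=
  ∀ M, N.Reachable M → ∀ G : N.T →₀ ℕ, (G.sum fun _ n => n) = 2 → ¬ N.Conflict M G

/-- Structural conflict net: transitions occurring together in a step at a reachable
marking have disjoint presets. -/
def StructuralConflictNet (N : Net) : Prop :=
  ∀ t u : N.T,
    (∃ M, N.Reachable M ∧ N.Enabled M (Finsupp.single t 1 + Finsupp.single u 1)) →
    ∀ s, min (N.pre t s) (N.pre u s) = 0

/-- A sufficiently large ambient type from which the places and transitions of
GR-processes of `N` are drawn. -/
def Amb (N : Net) : Type := Set (N.S ⊕ N.T ⊕ ℕ)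

end Net
/-- Raw data of a (Goltz-Reisig) process over a net `N` : an occurrence net
with places `pl` and transitions `tr` (subsets of an ambient type), flow
`Fst` (place → transition) and `Fts` (transition → place), and the process
mapping `piS`, `piT` into `N`. -/
structure RawProc (N : Net) where
  pl : Set N.Amb
  tr : Set N.Amb
  Fst : N.Amb → N.Amb → ℕ
  Fts : N.Amb → N.Amb → ℕ
  piS : N.Amb → N.S
  piT : N.Amb → N.T

namespace RawProc

variable {N : Net}

/-- The flow relation of the process (places tagged `inl`, transitions `inr`). -/
def rel (P : RawProc N) : (N.Amb ⊕ N.Amb) → (N.Amb ⊕ N.Amb) → Prop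
  | Sum.inl x, Sum.inr t => 0 < P.Fst x t
  | Sum.inr t, Sum.inl x => 0 < P.Fts t x
  | _, _ => False

/-- The causal order `ℱ⁺` of the process. -/
def causal (P : RawProc N) : (N.Amb ⊕ N.Amb) → (N.Amb ⊕ N.Amb) → Prop :=
  Relation.TransGen P.rel

/-- The initially marked places: those with empty preset. -/
def init (P : RawProc N) : Set N.Amb := {x | x ∈ P.pl ∧ ∀ t, P.Fts t x = 0}

/-- The end `P°` of the process: places with empty postset. -/
def ends (P : RawProc N) : Set N.Amb := {x | x ∈ P.pl ∧ ∀ t, P.Fst x t = 0}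

/-- The marking `ĤP = π(P°)` of the underlying net reached at the end of `P`. -/
noncomputable def endMark (P : RawProc N) : N.S → ℕ :=
  fun s => {x | x ∈ P.ends ∧ P.piS x = s}.ncard

/-- A process is finite iff its set of transitions is finite. -/
def FiniteP (P : RawProc N) : Prop := P.tr.Finite

open Classical in
/-- `swap P p q` : exchange the outgoing arcs of the places `p` and `q`. -/
noncomputable def swap (P : RawProc N) (p q : N.Amb) : RawProc N :=
  { P with Fst := fun x t => if x = p then P.Fst q t else if x = q then P.Fst p t else P.Fst x t }

end RawProc

/-- The conditions making a `RawProc` a GR-process of the net `N`. -/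
structure IsProc (N : Net) (P : RawProc N) : Prop where
  fst_dom : ∀ x t, 0 < P.Fst x t → x ∈ P.pl ∧ t ∈ P.tr
  fts_dom : ∀ t x, 0 < P.Fts t x → x ∈ P.pl ∧ t ∈ P.tr
  pre_unique : ∀ x t t', 0 < P.Fts t x → 0 < P.Fts t' x → t = t'
  pre_le_one : ∀ t x, P.Fts t x ≤ 1
  post_unique : ∀ x t t', 0 < P.Fst x t → 0 < P.Fst x t' → t = t'
  post_le_one : ∀ x t, P.Fst x t ≤ 1
  acyclic : ∀ z, ¬ P.causal z z
  finite_past : ∀ u ∈ P.tr, {t : N.Amb | P.causal (Sum.inr t) (Sum.inr u)}.Finite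
  init_fin : ∀ s : N.S, {x | x ∈ P.init ∧ P.piS x = s}.Finite
  init_marking : ∀ s : N.S, N.M0 s = {x | x ∈ P.init ∧ P.piS x = s}.ncard
  pre_fin : ∀ t ∈ P.tr, {x | 0 < P.Fst x t}.Finite
  post_fin : ∀ t ∈ P.tr, {x | 0 < P.Fts t x}.Finite
  pre_match : ∀ t ∈ P.tr, ∀ s : N.S, N.pre (P.piT t) s = ∑ᶠ x ∈ {x | P.piS x = s}, P.Fst x t
  post_match : ∀ t ∈ P.tr, ∀ s : N.S, N.post (P.piT t) s = ∑ᶠ x ∈ {x | P.piS x = s}, P.Fts t x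

/-- `ProcPrefix N Q P` : `Q ≤ P`, i.e. `Q` is a prefix of the process `P`. -/
def ProcPrefix (N : Net) (Q P : RawProc N) : Prop :=
  Q.pl ⊆ P.pl ∧ Q.tr ⊆ P.tr ∧
  (∀ x ∈ Q.pl, ∀ t ∈ Q.tr, Q.Fst x t = P.Fst x t ∧ Q.Fts t x = P.Fts t x) ∧
  (∀ x ∈ Q.pl, Q.piS x = P.piS x) ∧ (∀ t ∈ Q.tr, Q.piT t = P.piT t) ∧
  Q.init = P.init

/-- Isomorphism of processes: a bijection between places and between transitions
respecting the flow, the initial marking and the process mappings. -/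
def Iso (N : Net) (P Q : RawProc N) : Prop :=
  ∃ fp ft : N.Amb → N.Amb,
    Set.BijOn fp P.pl Q.pl ∧ Set.BijOn ft P.tr Q.tr ∧
    (∀ x ∈ P.pl, ∀ t ∈ P.tr,
      Q.Fst (fp x) (ft t) = P.Fst x t ∧ Q.Fts (ft t) (fp x) = P.Fts t x) ∧
    (∀ x ∈ P.pl, (x ∈ P.init ↔ fp x ∈ Q.init)) ∧
    (∀ x ∈ P.pl, Q.piS (fp x) = P.piS x) ∧ (∀ t ∈ P.tr, Q.piT (ft t) = P.piT t)

/-- `p` and `q` are causally unordered places with the same image, so they may be swapped. -/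
def Swappable {N : Net} (P : RawProc N) (p q : N.Amb) : Prop :=
  p ∈ P.pl ∧ q ∈ P.pl ∧ P.piS p = P.piS q ∧
  ¬ P.causal (Sum.inl p) (Sum.inl q) ∧ ¬ P.causal (Sum.inl q) (Sum.inl p)

/-- `P ∼__S Q` : `Q` is obtained from `P` by a single swap. -/
def SwapRel (N : Net) (P Q : RawProc N) : Prop :=
  ∃ p q, Swappable P p q ∧ Q = P.swap p q

/-- `P ≡₁ Q` : one-step swapping equivalence of GR-processes (swap followed by isomorphism). -/
def OneSwap (N : Net) (P Q : RawProc N) : Prop :=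
  IsProc N P ∧ IsProc N Q ∧ ∃ p q, Swappable P p q ∧ Iso N (P.swap p q) Q

/-- `P ≡₁* Q` : the reflexive-transitive closure of one-step swapping equivalence. -/
def SwapEqv (N : Net) : RawProc N → RawProc N → Prop :=
  Relation.ReflTransGen (OneSwap N)

/-- `P —a→ Q` : the process `Q` extends `P` by exactly one transition, labelled `a`. -/
def StepExt (N : Net) (P Q : RawProc N) (a : N.T) : Prop :=
  ProcPrefix N P Q ∧ ∃ t, t ∉ P.tr ∧ Q.tr = insert t P.tr ∧ Q.piT t = a

/-- `P ⊑₁^∞ Q` : every finite prefix `P''` of `P` satisfies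
`P'' ≤ P' ≡₁* Q' ≤ Q` for some finite GR-processes `P'`, `Q'`. -/
def SwapLe (N : Net) (P Q : RawProc N) : Prop :=
  ∀ P'' : RawProc N, IsProc N P'' → P''.FiniteP → ProcPrefix N P'' P →
    ∃ P' Q' : RawProc N, IsProc N P' ∧ P'.FiniteP ∧ IsProc N Q' ∧ Q'.FiniteP ∧
      ProcPrefix N P'' P' ∧ SwapEqv N P' Q' ∧ ProcPrefix N Q' Q

/-- `BDapprox N P` : the smallest set of finite GR-processes containing all finite
prefixes of `P` and closed under `≡₁` and under taking prefixes. -/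
inductive BDapprox (N : Net) (P : RawProc N) : RawProc N → Prop
  | base (Q : RawProc N) : IsProc N Q → Q.FiniteP → ProcPrefix N Q P → BDapprox N P Q
  | swapc (Q R : RawProc N) :
      BDapprox N P R → IsProc N Q → Q.FiniteP → OneSwap N Q R → BDapprox N P Q
  | prefc (Q R : RawProc N) :
      BDapprox N P R → IsProc N Q → Q.FiniteP → ProcPrefix N Q R → BDapprox N P Q

namespace RawProc

variable {N : Net}

open Classical in
lemma swap_Fst (P : RawProc N) (p q x t) :
    (P.swap p q).Fst x t =
      if x = p then P.Fst q t else if x = q then P.Fst p t else P.Fst x t := rfl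

@[simp] lemma swap_pl (P : RawProc N) (p q) : (P.swap p q).pl = P.pl := rfl
@[simp] lemma swap_tr (P : RawProc N) (p q) : (P.swap p q).tr = P.tr := rfl
@[simp] lemma swap_Fts (P : RawProc N) (p q) : (P.swap p q).Fts = P.Fts := rfl
@[simp] lemma swap_piS (P : RawProc N) (p q) : (P.swap p q).piS = P.piS := rfl
@[simp] lemma swap_piT (P : RawProc N) (p q) : (P.swap p q).piT = P.piT := rfl
@[simp] lemma swap_init (P : RawProc N) (p q) : (P.swap p q).init = P.init := rfl

open Classical in
lemma swap_Fst_fst (P : RawProc N) (p q t) : (P.swap p q).Fst p t = P.Fst q t := by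
  rw [swap_Fst]; simp

open Classical in
lemma swap_Fst_snd (P : RawProc N) (p q t) : (P.swap p q).Fst q t = P.Fst p t := by
  rw [swap_Fst]
  by_cases h : q = p
  · subst h; simp
  · simp [h]

open Classical in
lemma swap_Fst_other (P : RawProc N) (p q x t) (h1 : x ≠ p) (h2 : x ≠ q) :
    (P.swap p q).Fst x t = P.Fst x t := by
  rw [swap_Fst, if_neg h1, if_neg h2]

lemma swap_swap (P : RawProc N) (p q : N.Amb) : (P.swap p q).swap p q = P := by
  cases P with
  | mk pl tr Fst Fts piS piT =>
    simp only [RawProc.swap]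
    congr 1
    funext x t
    split_ifs with h1 h2 h3 <;> simp_all

/-- Transport of the causal order along a flow-preserving map. -/
lemma causal_map {P P' : RawProc N} {fp ft : N.Amb → N.Amb}
    (hdF : ∀ x t, 0 < P.Fst x t → x ∈ P.pl ∧ t ∈ P.tr)
    (hdT : ∀ t x, 0 < P.Fts t x → x ∈ P.pl ∧ t ∈ P.tr)
    (hflow : ∀ x ∈ P.pl, ∀ t ∈ P.tr,
      P'.Fst (fp x) (ft t) = P.Fst x t ∧ P'.Fts (ft t) (fp x) = P.Fts t x)
    {z w} (h : P.causal z w) :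
    P'.causal (Sum.map fp ft z) (Sum.map fp ft w) := by
  refine Relation.TransGen.lift (Sum.map fp ft) ?_ _ _ h
  rintro (x | t) (y | u) hr
  · exact hr.elim
  · have hmem := hdF x u hr
    show 0 < P'.Fst (fp x) (ft u)
    rw [(hflow x hmem.1 u hmem.2).1]; exact hr
  · have hmem := hdT t y hr
    show 0 < P'.Fts (ft t) (fp y)
    rw [(hflow y hmem.1 t hmem.2).2]; exact hr
  · exact hr.elim

end RawProc

/-- Swapping commutes with isomorphism:
`(∃ P'. P ≅ P' ∼_S Q) ↔ (∃ Q'. P ∼_S Q' ≅ Q)`. -/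
theorem swap_iso_commute (N : Net) (P Q : RawProc N)
    (hP : IsProc N P) (hQ : IsProc N Q) :
    (∃ P', Iso N P P' ∧ SwapRel N P' Q) ↔ (∃ Q', SwapRel N P Q' ∧ Iso N Q' Q) := by
  constructor
  · rintro ⟨P', ⟨fp, ft, hbp, hbt, hflow, hinit, hpiS, hpiT⟩, p, q, hsw, rfl⟩
    obtain ⟨hpP, hqP, hpi, hc1, hc2⟩ := hsw
    obtain ⟨p', hp', rfl⟩ := hbp.2.2 hpP
    obtain ⟨q', hq', rfl⟩ := hbp.2.2 hqP
    have hinj := hbp.2.1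
    refine ⟨P.swap p' q', ⟨p', q', ⟨hp', hq', ?_, ?_, ?_⟩, rfl⟩,
      fp, ft, hbp, hbt, ?_, ?_, ?_, ?_⟩
    · exact (hpiS p' hp').symm.trans (hpi.trans (hpiS q' hq'))
    · intro h
      exact hc1 (RawProc.causal_map hP.fst_dom hP.fts_dom hflow h)
    · intro h
      exact hc2 (RawProc.causal_map hP.fst_dom hP.fts_dom hflow h)
    · intro x hx t ht
      refine ⟨?_, (hflow x hx t ht).2⟩
      rw [RawProc.swap_Fst, RawProc.swap_Fst]
      by_cases hxp : x = p'
      · subst hxp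
        simp only [if_pos rfl]
        exact (hflow q' hq' t ht).1
      · have hne : fp x ≠ fp p' := fun h => hxp (hinj hx hp' h)
        by_cases hxq : x = q'
        · subst hxq
          simp only [if_neg hne, if_neg hxp, if_pos rfl]
          exact (hflow p' hp' t ht).1
        · have hne' : fp x ≠ fp q' := fun h => hxq (hinj hx hq' h)
          simp only [if_neg hne, if_neg hne', if_neg hxp, if_neg hxq]
          exact (hflow x hx t ht).1
    · exact hinit
    · exact hpiS
    · exact hpiT
  · rintro ⟨Q', ⟨p, q, hsw, rfl⟩, fp, ft, hbp, hbt, hflow, hinit, hpiS, hpiT⟩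
    obtain ⟨hpP, hqP, hpi, hc1, hc2⟩ := hsw
    simp only [RawProc.swap_pl, RawProc.swap_tr] at hbp hbt hflow hinit hpiS hpiT
    haveI : Nonempty N.Amb := ⟨p⟩
    have hinj := hbp.2.1
    set a := fp p with ha
    set b := fp q with hb
    have haQ : a ∈ Q.pl := hbp.1 hpP
    have hbQ : b ∈ Q.pl := hbp.1 hqP
    -- flow of the iso P → Q.swap a b
    have hflow' : ∀ x ∈ P.pl, ∀ t ∈ P.tr,
        (Q.swap a b).Fst (fp x) (ft t) = P.Fst x t ∧
        (Q.swap a b).Fts (ft t) (fp x) = P.Fts t x := by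
      intro x hx t ht
      constructor
      · by_cases hxp : x = p
        · rw [hxp, ← ha, RawProc.swap_Fst_fst, hb, (hflow q hqP t ht).1,
            RawProc.swap_Fst_snd]
        · have hne : fp x ≠ a := fun h => hxp (hinj hx hpP (h.trans ha))
          by_cases hxq : x = q
          · rw [hxq, ← hb, RawProc.swap_Fst_snd, ha, (hflow p hpP t ht).1,
              RawProc.swap_Fst_fst]
          · have hne' : fp x ≠ b := fun h => hxq (hinj hx hqP (h.trans hb))
            rw [RawProc.swap_Fst_other _ _ _ _ _ hne hne', (hflow x hx t ht).1,
              RawProc.swap_Fst_other _ _ _ _ _ hxp hxq]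
      · exact (hflow x hx t ht).2
    -- domain conditions for Q.swap a b
    have hdF : ∀ x t, 0 < (Q.swap a b).Fst x t → x ∈ Q.pl ∧ t ∈ Q.tr := by
      intro x t h
      rw [RawProc.swap_Fst] at h
      split_ifs at h with h1 h2
      · exact ⟨h1 ▸ haQ, (hQ.fst_dom _ _ h).2⟩
      · exact ⟨h2 ▸ hbQ, (hQ.fst_dom _ _ h).2⟩
      · exact hQ.fst_dom _ _ h
    have hdT : ∀ t x, 0 < (Q.swap a b).Fts t x → x ∈ Q.pl ∧ t ∈ Q.tr := hQ.fts_dom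
    -- inverse maps
    have hgp := hbp.invOn_invFunOn
    have hgt := hbt.invOn_invFunOn
    have hbp' := hbp.symm hgp.symm
    have hbt' := hbt.symm hgt.symm
    set gp := Function.invFunOn fp P.pl with hgpdef
    set gt := Function.invFunOn ft P.tr with hgtdef
    have hflowinv : ∀ y ∈ Q.pl, ∀ u ∈ Q.tr,
        P.Fst (gp y) (gt u) = (Q.swap a b).Fst y u ∧
        P.Fts (gt u) (gp y) = (Q.swap a b).Fts u y := by
      intro y hy u hu
      have hx : gp y ∈ P.pl := hbp'.1 hy
      have ht : gt u ∈ P.tr := hbt'.1 hu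
      have h1 := hflow' (gp y) hx (gt u) ht
      rw [hgp.2 hy, hgt.2 hu] at h1
      exact ⟨h1.1.symm, h1.2.symm⟩
    refine ⟨Q.swap a b, ⟨fp, ft, hbp, hbt, hflow', hinit, hpiS, hpiT⟩,
      a, b, ⟨haQ, hbQ, ?_, ?_, ?_⟩, (RawProc.swap_swap Q a b).symm⟩
    · show Q.piS a = Q.piS b
      have h1 := hpiS p hpP
      have h2 := hpiS q hqP
      calc Q.piS a = P.piS p := h1
        _ = P.piS q := hpi
        _ = Q.piS b := h2.symm
    · intro h
      have := RawProc.causal_map hdF hdT hflowinv h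
      rw [show Sum.map gp gt (Sum.inl a) = Sum.inl p from by simp [ha, hgp.1 hpP],
          show Sum.map gp gt (Sum.inl b) = Sum.inl q from by simp [hb, hgp.1 hqP]] at this
      exact hc1 this
    · intro h
      have := RawProc.causal_map hdF hdT hflowinv h
      rw [show Sum.map gp gt (Sum.inl a) = Sum.inl p from by simp [ha, hgp.1 hpP],
          show Sum.map gp gt (Sum.inl b) = Sum.inl q from by simp [hb, hgp.1 hqP]] at this
      exact hc2 this
end

section
/- If P ≤ Q' ∼_S Q for a finite GR-process P and GR-processes Q', Q of a net N, then there are finite GR-processes P', P'' with P ≤ P' ∼_S P'' ≤ Q. -/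
/-! ### Auxiliary development for `prefix_swap_refine` -/

section PrefixSwapAux

variable {N : Net}

lemma causal_mono' {P Q : RawProc N}
    (hfst : ∀ x t, 0 < P.Fst x t → 0 < Q.Fst x t)
    (hfts : ∀ t x, 0 < P.Fts t x → 0 < Q.Fts t x)
    {a b} (h : P.causal a b) : Q.causal a b := by
  refine Relation.TransGen.mono ?_ a b h
  rintro (x | x) (y | y) hr
  · exact hr.elim
  · exact hfst x y hr
  · exact hfts x y hr
  · exact hr.elim

lemma tr_of_causal {Q' : RawProc N} (hQ' : IsProc N Q') {v : N.Amb} {b}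
    (h : Q'.causal (Sum.inr v) b) : v ∈ Q'.tr := by
  obtain ⟨c, hc, -⟩ := Relation.TransGen.head'_iff.mp h
  rcases c with x | t
  · exact (hQ'.fts_dom v x hc).2
  · exact hc.elim

/-- Pre-places (in `Q'`) of transitions of a prefix `P` already lie in `P.pl`,
with matching arc weights. -/
lemma fst_closure {P Q' : RawProc N} (hP : IsProc N P) (hQ' : IsProc N Q')
    (h1 : ProcPrefix N P Q') {t : N.Amb} (ht : t ∈ P.tr) (x : N.Amb) :
    Q'.Fst x t = P.Fst x t := by
  classical
  obtain ⟨hpl, htr, hflow, hpiS, hpiT, hinit⟩ := h1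
  by_cases hx : x ∈ P.pl
  · exact ((hflow x hx t ht).1).symm
  have hPx : P.Fst x t = 0 := by
    by_contra h
    exact hx (hP.fst_dom x t (Nat.pos_of_ne_zero h)).1
  rw [hPx]
  by_contra h
  have hxpos : 0 < Q'.Fst x t := Nat.pos_of_ne_zero h
  set s := Q'.piS x with hs
  have htQ : t ∈ Q'.tr := htr ht
  have hf1 : ({y | Q'.piS y = s} ∩ Function.support fun y => Q'.Fst y t).Finite := by
    apply Set.Finite.subset (hQ'.pre_fin t htQ)
    intro y hy
    exact Nat.pos_of_ne_zero hy.2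
  have hf2 : ({y | P.piS y = s} ∩ Function.support fun y => P.Fst y t).Finite := by
    apply Set.Finite.subset (hP.pre_fin t ht)
    intro y hy
    exact Nat.pos_of_ne_zero hy.2
  have e1 : N.pre (Q'.piT t) s = ∑ y ∈ hf1.toFinset, Q'.Fst y t := by
    rw [hQ'.pre_match t htQ s, finsum_mem_eq_sum]
  have e2 : N.pre (P.piT t) s = ∑ y ∈ hf2.toFinset, P.Fst y t := by
    rw [hP.pre_match t ht s, finsum_mem_eq_sum]
  have hmem2 : ∀ y ∈ hf2.toFinset, y ∈ P.pl := by
    intro y hy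
    rw [Set.Finite.mem_toFinset] at hy
    exact (hP.fst_dom y t (Nat.pos_of_ne_zero hy.2)).1
  have hsub : hf2.toFinset ⊆ hf1.toFinset := by
    intro y hy
    have hyP := hmem2 y hy
    rw [Set.Finite.mem_toFinset] at hy ⊢
    obtain ⟨hy1, hy2⟩ := hy
    have hy2' : P.Fst y t ≠ 0 := hy2
    have heq := (hflow y hyP t ht).1
    refine ⟨by rw [Set.mem_setOf_eq, ← hpiS y hyP]; exact hy1, ?_⟩
    simp only [Function.mem_support]
    omega
  have hcong : ∑ y ∈ hf2.toFinset, P.Fst y t = ∑ y ∈ hf2.toFinset, Q'.Fst y t := by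
    refine Finset.sum_congr rfl fun y hy => ?_
    exact (hflow y (hmem2 y hy) t ht).1
  have hsdiff : ∑ y ∈ hf1.toFinset \ hf2.toFinset, Q'.Fst y t
      + ∑ y ∈ hf2.toFinset, Q'.Fst y t = ∑ y ∈ hf1.toFinset, Q'.Fst y t :=
    Finset.sum_sdiff hsub
  have hxin : x ∈ hf1.toFinset \ hf2.toFinset := by
    rw [Finset.mem_sdiff, Set.Finite.mem_toFinset, Set.Finite.mem_toFinset]
    constructor
    · exact ⟨rfl, by simp only [Function.mem_support]; omega⟩
    · intro hx2
      exact hx (hmem2 x (by rwa [Set.Finite.mem_toFinset]))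
  have hpi : P.piT t = Q'.piT t := hpiT t ht
  rw [hpi] at e2
  have hzero : ∑ y ∈ hf1.toFinset \ hf2.toFinset, Q'.Fst y t = 0 := by omega
  have := Finset.sum_eq_zero_iff.mp hzero x hxin
  omega

/-- Places of the extension of `P` by the extra transitions `U`. -/
def extPl (Q' P : RawProc N) (U : Set N.Amb) : Set N.Amb :=
  P.pl ∪ {x | ∃ u ∈ P.tr ∪ U, 0 < Q'.Fts u x ∨ 0 < Q'.Fst x u}

open Classical in
/-- The extension of the prefix `P` of `Q'` by the extra transitions `U`. -/
noncomputable def extProc (Q' P : RawProc N) (U : Set N.Amb) : RawProc N where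
  pl := extPl Q' P U
  tr := P.tr ∪ U
  Fst := fun x t => if x ∈ extPl Q' P U ∧ t ∈ P.tr ∪ U then Q'.Fst x t else 0
  Fts := fun t x => if x ∈ extPl Q' P U ∧ t ∈ P.tr ∪ U then Q'.Fts t x else 0
  piS := Q'.piS
  piT := Q'.piT

variable {Q' P : RawProc N} {U : Set N.Amb}

lemma extProc_fst_eq {t : N.Amb} (ht : t ∈ P.tr ∪ U) (x : N.Amb) :
    (extProc Q' P U).Fst x t = Q'.Fst x t := by
  classical
  show (if x ∈ extPl Q' P U ∧ t ∈ P.tr ∪ U then Q'.Fst x t else 0) = Q'.Fst x t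
  rcases Nat.eq_zero_or_pos (Q'.Fst x t) with h | h
  · rw [h]; split <;> rfl
  · rw [if_pos ⟨Or.inr ⟨t, ht, Or.inr h⟩, ht⟩]

lemma extProc_fts_eq {t : N.Amb} (ht : t ∈ P.tr ∪ U) (x : N.Amb) :
    (extProc Q' P U).Fts t x = Q'.Fts t x := by
  classical
  show (if x ∈ extPl Q' P U ∧ t ∈ P.tr ∪ U then Q'.Fts t x else 0) = Q'.Fts t x
  rcases Nat.eq_zero_or_pos (Q'.Fts t x) with h | h
  · rw [h]; split <;> rfl
  · rw [if_pos ⟨Or.inr ⟨t, ht, Or.inl h⟩, ht⟩]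

lemma extProc_fst_pos {x t : N.Amb} (h : 0 < (extProc Q' P U).Fst x t) :
    x ∈ extPl Q' P U ∧ t ∈ P.tr ∪ U ∧ 0 < Q'.Fst x t := by
  by_cases hc : x ∈ extPl Q' P U ∧ t ∈ P.tr ∪ U
  · exact ⟨hc.1, hc.2, by rwa [show (extProc Q' P U).Fst x t = Q'.Fst x t from if_pos hc] at h⟩
  · rw [show (extProc Q' P U).Fst x t = 0 from if_neg hc] at h; omega

lemma extProc_fts_pos {t x : N.Amb} (h : 0 < (extProc Q' P U).Fts t x) :
    x ∈ extPl Q' P U ∧ t ∈ P.tr ∪ U ∧ 0 < Q'.Fts t x := by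
  by_cases hc : x ∈ extPl Q' P U ∧ t ∈ P.tr ∪ U
  · exact ⟨hc.1, hc.2, by rwa [show (extProc Q' P U).Fts t x = Q'.Fts t x from if_pos hc] at h⟩
  · rw [show (extProc Q' P U).Fts t x = 0 from if_neg hc] at h; omega

lemma extProc_causal {a b} (h : (extProc Q' P U).causal a b) : Q'.causal a b :=
  causal_mono' (fun x t hx => (extProc_fst_pos hx).2.2)
    (fun t x hx => (extProc_fts_pos hx).2.2) h

variable (hP : IsProc N P) (hQ' : IsProc N Q') (h1 : ProcPrefix N P Q')
  (hUsub : U ⊆ Q'.tr)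
  (hUdc : ∀ v u, u ∈ U → Q'.causal (Sum.inr v) (Sum.inr u) → v ∈ U)

include hQ' h1 in
lemma extPl_sub : extPl Q' P U ⊆ Q'.pl := by
  rintro x (hx | ⟨u, hu, h | h⟩)
  · exact h1.1 hx
  · exact (hQ'.fts_dom u x h).1
  · exact (hQ'.fst_dom x u h).1

include h1 hUsub in
lemma extTr_sub : P.tr ∪ U ⊆ Q'.tr := by
  rintro t (ht | ht)
  · exact h1.2.1 ht
  · exact hUsub ht

include hP hQ' h1 hUsub hUdc in
lemma extProc_init : (extProc Q' P U).init = Q'.init := by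
  ext x
  constructor
  · rintro ⟨hxpl, hxfts⟩
    refine ⟨extPl_sub hQ' h1 hxpl, ?_⟩
    intro v
    by_contra hv
    have hvpos : 0 < Q'.Fts v x := Nat.pos_of_ne_zero hv
    by_cases hxP : x ∈ P.pl
    · by_cases hxi : x ∈ P.init
      · rw [h1.2.2.2.2.2] at hxi
        exact hv (hxi.2 v)
      · have : ∃ t, P.Fts t x ≠ 0 := by
          by_contra hall
          push_neg at hall
          exact hxi ⟨hxP, hall⟩
        obtain ⟨t, htx⟩ := this
        have htpos : 0 < P.Fts t x := Nat.pos_of_ne_zero htx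
        have htP : t ∈ P.tr := (hP.fts_dom t x htpos).2
        have := extProc_fts_eq (Q' := Q') (P := P) (U := U) (Or.inl htP) x
        have hflow := (h1.2.2.1 x hxP t htP).2
        have := hxfts t
        omega
    · rcases hxpl with hx | ⟨u, hu, hpost | hpre⟩
      · exact hxP hx
      · have := extProc_fts_eq (Q' := Q') (P := P) (U := U) hu x
        have := hxfts u
        omega
      · rcases hu with hu | hu
        · have := fst_closure hP hQ' h1 hu x
          have hPx : P.Fst x u = 0 := by
            by_contra hne
            exact hxP (hP.fst_dom x u (Nat.pos_of_ne_zero hne)).1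
          omega
        · have hcau : Q'.causal (Sum.inr v) (Sum.inr u) :=
            Relation.TransGen.head
              (show Q'.rel (Sum.inr v) (Sum.inl x) from hvpos)
              (Relation.TransGen.single
                (show Q'.rel (Sum.inl x) (Sum.inr u) from hpre))
          have hvU : v ∈ U := hUdc v u hu hcau
          have := extProc_fts_eq (Q' := Q') (P := P) (U := U) (Or.inr hvU) x
          have := hxfts v
          omega
  · rintro ⟨hxpl, hxfts⟩
    have hxP : x ∈ P.init := by rw [h1.2.2.2.2.2]; exact ⟨hxpl, hxfts⟩
    refine ⟨Or.inl hxP.1, ?_⟩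
    intro t
    classical
    show (if x ∈ extPl Q' P U ∧ t ∈ P.tr ∪ U then Q'.Fts t x else 0) = 0
    rw [hxfts t]
    split <;> rfl

include hP hQ' h1 hUsub hUdc in
lemma extProc_isProc : IsProc N (extProc Q' P U) where
  fst_dom x t h := ⟨(extProc_fst_pos h).1, (extProc_fst_pos h).2.1⟩
  fts_dom t x h := ⟨(extProc_fts_pos h).1, (extProc_fts_pos h).2.1⟩
  pre_unique x t t' h h' :=
    hQ'.pre_unique x t t' (extProc_fts_pos h).2.2 (extProc_fts_pos h').2.2
  pre_le_one t x := by
    classical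
    show (if _ ∧ _ then Q'.Fts t x else 0) ≤ 1
    split
    · exact hQ'.pre_le_one t x
    · omega
  post_unique x t t' h h' :=
    hQ'.post_unique x t t' (extProc_fst_pos h).2.2 (extProc_fst_pos h').2.2
  post_le_one x t := by
    classical
    show (if _ ∧ _ then Q'.Fst x t else 0) ≤ 1
    split
    · exact hQ'.post_le_one x t
    · omega
  acyclic z hz := hQ'.acyclic z (extProc_causal hz)
  finite_past u hu := by
    refine Set.Finite.subset (hQ'.finite_past u (extTr_sub h1 hUsub hu)) ?_
    intro t ht
    exact extProc_causal ht
  init_fin s := by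
    rw [extProc_init hP hQ' h1 hUsub hUdc]
    exact hQ'.init_fin s
  init_marking s := by
    rw [extProc_init hP hQ' h1 hUsub hUdc]
    exact hQ'.init_marking s
  pre_fin t ht := by
    refine Set.Finite.subset (hQ'.pre_fin t (extTr_sub h1 hUsub ht)) ?_
    intro x hx
    exact (extProc_fst_pos hx).2.2
  post_fin t ht := by
    refine Set.Finite.subset (hQ'.post_fin t (extTr_sub h1 hUsub ht)) ?_
    intro x hx
    exact (extProc_fts_pos hx).2.2
  pre_match t ht s := by
    simp only [extProc_fst_eq ht]
    exact hQ'.pre_match t (extTr_sub h1 hUsub ht) s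
  post_match t ht s := by
    simp only [extProc_fts_eq ht]
    exact hQ'.post_match t (extTr_sub h1 hUsub ht) s

include hP hQ' h1 hUsub hUdc in
lemma extProc_prefix : ProcPrefix N P (extProc Q' P U) := by
  refine ⟨Set.subset_union_left, Set.subset_union_left, ?_, ?_, ?_, ?_⟩
  · intro x hx t ht
    rw [extProc_fst_eq (Or.inl ht) x, extProc_fts_eq (Or.inl ht) x]
    exact ⟨(h1.2.2.1 x hx t ht).1, (h1.2.2.1 x hx t ht).2⟩
  · intro x hx
    exact h1.2.2.2.1 x hx
  · intro t ht
    exact h1.2.2.2.2.1 t ht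
  · rw [extProc_init hP hQ' h1 hUsub hUdc]
    exact h1.2.2.2.2.2

open Classical in
lemma swap_fst (R : RawProc N) (p q x t : N.Amb) :
    (R.swap p q).Fst x t = R.Fst (Equiv.swap p q x) t := by
  classical
  show (if x = p then R.Fst q t else if x = q then R.Fst p t else R.Fst x t) = _
  rw [Equiv.swap_apply_def]
  split_ifs <;> rfl

lemma swap_init (R : RawProc N) (p q : N.Amb) : (R.swap p q).init = R.init := rfl

end PrefixSwapAux

/-- If `P ≤ Q' ∼_S Q` with `P` finite, then there are finite GR-processes
`P'`, `P''` with `P ≤ P' ∼_S P'' ≤ Q`. -/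
theorem prefix_swap_refine (N : Net) (P Q' Q : RawProc N)
    (hP : IsProc N P) (hPf : P.FiniteP) (hQ' : IsProc N Q') (hQ : IsProc N Q)
    (h1 : ProcPrefix N P Q') (h2 : SwapRel N Q' Q) :
    ∃ P' P'', IsProc N P' ∧ P'.FiniteP ∧ IsProc N P'' ∧ P''.FiniteP ∧
      ProcPrefix N P P' ∧ SwapRel N P' P'' ∧ ProcPrefix N P'' Q := by
  classical
  obtain ⟨p, q, hsw, rfl⟩ := h2
  obtain ⟨hpQ, hqQ, hpiSpq, hcpq, hcqp⟩ := hsw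
  set C : Set N.Amb := {u | 0 < Q'.Fts u p} ∪ {u | 0 < Q'.Fts u q} with hC
  have hCfin : C.Finite := by
    apply Set.Finite.union
    · exact Set.Subsingleton.finite fun a ha b hb => hQ'.pre_unique p a b ha hb
    · exact Set.Subsingleton.finite fun a ha b hb => hQ'.pre_unique q a b ha hb
  have hCtr : ∀ u ∈ C, u ∈ Q'.tr := by
    rintro u (h | h)
    · exact (hQ'.fts_dom u p h).2
    · exact (hQ'.fts_dom u q h).2
  set U : Set N.Amb := ⋃ u ∈ C, insert u {v | Q'.causal (Sum.inr v) (Sum.inr u)} with hU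
  have hUfin : U.Finite :=
    hCfin.biUnion fun u hu => (hQ'.finite_past u (hCtr u hu)).insert u
  have hUsub : U ⊆ Q'.tr := by
    intro v hv
    simp only [hU, Set.mem_iUnion, Set.mem_insert_iff, exists_prop] at hv
    obtain ⟨u, hu, h⟩ := hv
    rcases h with rfl | h
    · exact hCtr _ hu
    · exact tr_of_causal hQ' h
  have hUdc : ∀ v u, u ∈ U → Q'.causal (Sum.inr v) (Sum.inr u) → v ∈ U := by
    intro v u hu hvu
    simp only [hU, Set.mem_iUnion, Set.mem_insert_iff, exists_prop] at hu ⊢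
    obtain ⟨w, hw, h⟩ := hu
    refine ⟨w, hw, Or.inr ?_⟩
    rcases h with rfl | h
    · exact hvu
    · exact hvu.trans h
  set E := extProc Q' P U with hE
  have hEproc : IsProc N E := extProc_isProc hP hQ' h1 hUsub hUdc
  have hEfin : E.FiniteP := hPf.union hUfin
  have hEinit : E.init = Q'.init := extProc_init hP hQ' h1 hUsub hUdc
  have hmempl : ∀ r, r ∈ Q'.pl → ({u | 0 < Q'.Fts u r} ⊆ C) → r ∈ E.pl := by
    intro r hr hsubC
    by_cases h : ∀ u, Q'.Fts u r = 0
    · have hri : r ∈ P.init := by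
        rw [h1.2.2.2.2.2]
        exact ⟨hr, h⟩
      exact Or.inl hri.1
    · push_neg at h
      obtain ⟨u, hu⟩ := h
      have hupos : 0 < Q'.Fts u r := Nat.pos_of_ne_zero hu
      have huU : u ∈ U := by
        simp only [hU, Set.mem_iUnion, Set.mem_insert_iff, exists_prop]
        exact ⟨u, hsubC hupos, Or.inl rfl⟩
      exact Or.inr ⟨u, Or.inr huU, Or.inl hupos⟩
  have hpE : p ∈ E.pl := hmempl p hpQ (fun u hu => Or.inl hu)
  have hqE : q ∈ E.pl := hmempl q hqQ (fun u hu => Or.inr hu)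
  have hswE : Swappable E p q := by
    refine ⟨hpE, hqE, hpiSpq, ?_, ?_⟩
    · intro h; exact hcpq (extProc_causal h)
    · intro h; exact hcqp (extProc_causal h)
  set σ := Equiv.swap p q with hσ
  have hσS : ∀ x, Q'.piS (σ x) = Q'.piS x := by
    intro x
    rcases eq_or_ne x p with rfl | hxp
    · rw [hσ, Equiv.swap_apply_left]; exact hpiSpq.symm
    rcases eq_or_ne x q with rfl | hxq
    · rw [hσ, Equiv.swap_apply_right]; exact hpiSpq
    · rw [hσ, Equiv.swap_apply_of_ne_of_ne hxp hxq]
  have hσpl : ∀ x, x ∈ E.pl → σ x ∈ E.pl := by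
    intro x hx
    rcases eq_or_ne x p with rfl | hxp
    · rw [hσ, Equiv.swap_apply_left]; exact hqE
    rcases eq_or_ne x q with rfl | hxq
    · rw [hσ, Equiv.swap_apply_right]; exact hpE
    · rw [hσ, Equiv.swap_apply_of_ne_of_ne hxp hxq]; exact hx
  set S := E.swap p q with hS
  have hSfst : ∀ x t, S.Fst x t = E.Fst (σ x) t := fun x t => swap_fst E p q x t
  have hQfst : ∀ x t, (Q'.swap p q).Fst x t = Q'.Fst (σ x) t := fun x t => swap_fst Q' p q x t
  have hposQfst : ∀ x t, 0 < S.Fst x t → 0 < (Q'.swap p q).Fst x t := by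
    intro x t h
    rw [hSfst] at h
    rw [hQfst]
    exact (extProc_fst_pos h).2.2
  have hposQfts : ∀ t x, 0 < S.Fts t x → 0 < (Q'.swap p q).Fts t x := by
    intro t x h
    exact (extProc_fts_pos h).2.2
  have hScau : ∀ {a b}, S.causal a b → (Q'.swap p q).causal a b :=
    fun h => causal_mono' hposQfst hposQfts h
  have hSproc : IsProc N S := by
    constructor
    case fst_dom =>
      intro x t h
      rw [hSfst] at h
      obtain ⟨ha, hb, -⟩ := extProc_fst_pos h
      refine ⟨?_, hb⟩
      have := hσpl (σ x) ha
      rwa [hσ, Equiv.swap_apply_self] at this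
    case fts_dom => exact hEproc.fts_dom
    case pre_unique => exact hEproc.pre_unique
    case pre_le_one => exact hEproc.pre_le_one
    case post_unique =>
      intro x t t' h h'
      rw [hSfst] at h h'
      exact hEproc.post_unique (σ x) t t' h h'
    case post_le_one =>
      intro x t
      rw [hSfst]
      exact hEproc.post_le_one (σ x) t
    case acyclic =>
      intro z hz
      exact hQ.acyclic z (hScau hz)
    case finite_past =>
      intro u hu
      refine Set.Finite.subset (hQ.finite_past u (extTr_sub h1 hUsub hu)) ?_
      intro t ht
      exact hScau ht
    case init_fin => exact hEproc.init_fin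
    case init_marking => exact hEproc.init_marking
    case pre_fin =>
      intro t ht
      have hset : {x | 0 < S.Fst x t} = σ ⁻¹' {x | 0 < E.Fst x t} := by
        ext x
        simp only [Set.mem_setOf_eq, Set.mem_preimage, hSfst]
      rw [hset]
      exact Set.Finite.preimage (σ.injective.injOn) (hEproc.pre_fin t ht)
    case post_fin => exact hEproc.post_fin
    case pre_match =>
      intro t ht s
      have hbase := hEproc.pre_match t ht s
      have hbij : Set.BijOn σ {x | E.piS x = s} {x | E.piS x = s} := by
        have hmap : Set.MapsTo σ {x | E.piS x = s} {x | E.piS x = s} := by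
          intro x hx
          show Q'.piS (σ x) = s
          rw [hσS x]; exact hx
        refine ⟨hmap, σ.injective.injOn, ?_⟩
        intro x hx
        refine ⟨σ x, hmap hx, ?_⟩
        rw [hσ, Equiv.swap_apply_self]
      have hre := finsum_mem_eq_of_bijOn (f := fun x => S.Fst x t)
        (g := fun y => E.Fst y t) σ hbij (fun x _ => hSfst x t)
      exact hbase.trans hre.symm
    case post_match => exact hEproc.post_match
  refine ⟨E, S, hEproc, hEfin, hSproc, hEfin, extProc_prefix hP hQ' h1 hUsub hUdc,
    ⟨p, q, hswE, hS⟩, ?_, ?_, ?_, ?_, ?_, ?_⟩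
  · intro x hx
    exact extPl_sub hQ' h1 hx
  · intro t ht
    exact extTr_sub h1 hUsub ht
  · intro x hx t ht
    constructor
    · rw [hSfst x t, hQfst x t]
      exact extProc_fst_eq ht (σ x)
    · exact extProc_fts_eq ht x
  · intro x hx
    rfl
  · intro t ht
    rfl
  · show S.init = (Q'.swap p q).init
    rw [hS, swap_init, swap_init]
    exact hEinit
end
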